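/- arXiv:1906.08707 — 6 statements merged into one kernel-verified Lean document; each statement's English description precedes it below -/
import Mathlib

section
/- Let n ≥ 1 and let k be an integer with 0 < k < n. For any x ∈ ℝⁿ, the function y ↦ -⟨x, y⟩ - H_b(y) attains a minimum on the set {y ∈ ℝⁿ : 0 < y_i < 1 for all i, ∑_i y_i = k}, and the minimizer is unique. -/
/-!
The minimizer is explicit: `y i = sigmoid (x i + ν)`, where the shift `ν` is chosen by the
intermediate value theorem so that `∑ i, y i = k`. Since the log-odds of `y` are `x + ν`, on the
constraint set the objective equals `∑ i, KL(z i ‖ y i)` plus a constant, and Gibbs' inequality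
(`log u < u - 1` for `u ≠ 1`) makes that sum positive unless `z = y`.
-/

open Real Finset

noncomputable def binEnt {n : ℕ} (y : Fin n → ℝ) : ℝ :=
  -∑ i, (y i * Real.log (y i) + (1 - y i) * Real.log (1 - y i))

noncomputable def lmlObj {n : ℕ} (x y : Fin n → ℝ) : ℝ :=
  -∑ i, x i * y i - binEnt y

open Filter Topology

lemma mul_log_lt_mul_log_add_sub {p q : ℝ} (hp : 0 < p) (hq : 0 < q) (hpq : p ≠ q) :
    p * log q < p * log p + (q - p) := by
  have hlog : log (q / p) < q / p - 1 :=
    log_lt_sub_one_of_pos (div_pos hq hp) (by rwa [Ne, div_eq_one_iff_eq hp.ne', eq_comm])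
  rw [log_div hq.ne' hp.ne'] at hlog
  have hmul := mul_lt_mul_of_pos_left hlog hp
  have hcancel : p * (q / p - 1) = q - p := by field_simp
  linarith

lemma mul_log_add_one_sub_mul_log_lt {t a : ℝ} (ht : t ∈ Set.Ioo 0 1) (ha : a ∈ Set.Ioo 0 1)
    (hta : t ≠ a) :
    t * log a + (1 - t) * log (1 - a) < t * log t + (1 - t) * log (1 - t) := by
  have h₁ := mul_log_lt_mul_log_add_sub ht.1 ha.1 hta
  have h₂ := mul_log_lt_mul_log_add_sub (sub_pos.2 ht.2) (sub_pos.2 ha.2) fun h => hta (by linarith)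
  linarith

lemma mul_log_add_one_sub_mul_log_le {t a : ℝ} (ht : t ∈ Set.Ioo 0 1) (ha : a ∈ Set.Ioo 0 1) :
    t * log a + (1 - t) * log (1 - a) ≤ t * log t + (1 - t) * log (1 - t) := by
  rcases eq_or_ne t a with rfl | hta
  · exact le_rfl
  · exact (mul_log_add_one_sub_mul_log_lt ht ha hta).le

lemma log_sigmoid_sub_log_one_sub_sigmoid (s : ℝ) :
    log (sigmoid s) - log (1 - sigmoid s) = s := by
  rw [← sigmoid_neg, ← sigmoid_mul_rexp_neg, log_mul (sigmoid_pos s).ne' (exp_pos _).ne', log_exp]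
  ring

lemma exists_sum_sigmoid_add_eq {ι : Type*} [Fintype ι] (x : ι → ℝ) {k : ℝ} (hk₀ : 0 < k)
    (hk : k < Fintype.card ι) : ∃ ν, ∑ i, sigmoid (x i + ν) = k := by
  have hcont : Continuous fun ν => ∑ i, sigmoid (x i + ν) := by fun_prop
  have hbot : Tendsto (fun ν => ∑ i, sigmoid (x i + ν)) atBot (𝓝 0) := by
    simpa using tendsto_finsetSum univ fun i _ =>
      tendsto_sigmoid_atBot.comp (tendsto_atBot_add_const_left _ (x i) tendsto_id)
  have htop : Tendsto (fun ν => ∑ i, sigmoid (x i + ν)) atTop (𝓝 (Fintype.card ι)) := by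
    simpa using tendsto_finsetSum univ fun i _ =>
      tendsto_sigmoid_atTop.comp (tendsto_atTop_add_const_left _ (x i) tendsto_id)
  exact mem_range_of_exists_le_of_exists_ge hcont
    (hbot.eventually (eventually_le_nhds hk₀)).exists
    (htop.eventually (eventually_ge_nhds hk)).exists

section

variable {n : ℕ} {x y z : Fin n → ℝ} {ν : ℝ}

lemma lmlObj_eq_of_logit_eq (hy : ∀ i, log (y i) - log (1 - y i) = x i + ν) (z : Fin n → ℝ) :
    lmlObj x z = ∑ i, (z i * log (z i) + (1 - z i) * log (1 - z i)
        - (z i * log (y i) + (1 - z i) * log (1 - y i)))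
      + ∑ i, log (1 - y i) + ν * ∑ i, z i := by
  have hx : x = fun i => log (y i) - log (1 - y i) - ν := by
    funext i; rw [hy]; ring
  subst hx
  simp only [lmlObj, binEnt, mul_sum, ← sum_neg_distrib, sub_eq_add_neg, ← sum_add_distrib]
  refine sum_congr rfl fun i _ => ?_
  ring

lemma lmlObj_lt_of_logit_eq (hy : ∀ i, y i ∈ Set.Ioo 0 1) (hz : ∀ i, z i ∈ Set.Ioo 0 1)
    (hsum : ∑ i, z i = ∑ i, y i) (hlogit : ∀ i, log (y i) - log (1 - y i) = x i + ν)
    (hzy : z ≠ y) : lmlObj x y < lmlObj x z := by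
  obtain ⟨j, hj⟩ := Function.ne_iff.1 hzy
  rw [lmlObj_eq_of_logit_eq hlogit, lmlObj_eq_of_logit_eq hlogit, hsum, add_lt_add_iff_right,
    add_lt_add_iff_right]
  simp only [sub_self, sum_const_zero]
  exact sum_pos' (fun i _ => sub_nonneg.2 (mul_log_add_one_sub_mul_log_le (hz i) (hy i)))
    ⟨j, mem_univ j, sub_pos.2 (mul_log_add_one_sub_mul_log_lt (hz j) (hy j) hj)⟩

lemma lmlObj_le_of_logit_eq (hy : ∀ i, y i ∈ Set.Ioo 0 1) (hz : ∀ i, z i ∈ Set.Ioo 0 1)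
    (hsum : ∑ i, z i = ∑ i, y i) (hlogit : ∀ i, log (y i) - log (1 - y i) = x i + ν) :
    lmlObj x y ≤ lmlObj x z := by
  rcases eq_or_ne z y with rfl | hzy
  · exact le_rfl
  · exact (lmlObj_lt_of_logit_eq hy hz hsum hlogit hzy).le

end

theorem lml_min_exists_unique_general (n k : ℕ) (hk : 0 < k) (hkn : k < n)
    (x : Fin n → ℝ) :
    ∃ y : Fin n → ℝ,
      ((∀ i, y i ∈ Set.Ioo (0 : ℝ) 1) ∧ ∑ i, y i = k) ∧
      (∀ z : Fin n → ℝ, ((∀ i, z i ∈ Set.Ioo (0 : ℝ) 1) ∧ ∑ i, z i = k) →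
        lmlObj x y ≤ lmlObj x z) ∧
      (∀ z : Fin n → ℝ, ((∀ i, z i ∈ Set.Ioo (0 : ℝ) 1) ∧ ∑ i, z i = k) →
        (∀ w : Fin n → ℝ, ((∀ i, w i ∈ Set.Ioo (0 : ℝ) 1) ∧ ∑ i, w i = k) →
          lmlObj x z ≤ lmlObj x w) → z = y) := by
  obtain ⟨ν, hν⟩ := exists_sum_sigmoid_add_eq x (k := k) (by exact_mod_cast hk)
    (by simpa using hkn)
  set y : Fin n → ℝ := fun i => sigmoid (x i + ν)
  have hy : ∀ i, y i ∈ Set.Ioo 0 1 := fun i => ⟨sigmoid_pos _, sigmoid_lt_one _⟩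
  have hlogit : ∀ i, log (y i) - log (1 - y i) = x i + ν := fun i =>
    log_sigmoid_sub_log_one_sub_sigmoid _
  refine ⟨y, ⟨hy, hν⟩, fun z hz => lmlObj_le_of_logit_eq hy hz.1 (hz.2.trans hν.symm) hlogit,
    fun z hz hzmin => ?_⟩
  by_contra hzy
  exact (hzmin y ⟨hy, hν⟩).not_gt
    (lmlObj_lt_of_logit_eq hy hz.1 (hz.2.trans hν.symm) hlogit hzy)

/-- for `0 < k < n`, the objective `y ↦ -⟨x,y⟩ - H_b(y)` attains a
minimum on `{y ∈ (0,1)ⁿ : ∑ y_i = k}`, and the minimizer is unique. -/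
theorem lml_min_exists_unique (n k : ℕ) (hn : 1 ≤ n) (hk : 0 < k) (hkn : k < n)
    (x : Fin n → ℝ) :
    ∃ y : Fin n → ℝ,
      ((∀ i, y i ∈ Set.Ioo (0 : ℝ) 1) ∧ ∑ i, y i = k) ∧
      (∀ z : Fin n → ℝ, ((∀ i, z i ∈ Set.Ioo (0 : ℝ) 1) ∧ ∑ i, z i = k) →
        lmlObj x y ≤ lmlObj x z) ∧
      (∀ z : Fin n → ℝ, ((∀ i, z i ∈ Set.Ioo (0 : ℝ) 1) ∧ ∑ i, z i = k) →
        (∀ w : Fin n → ℝ, ((∀ i, w i ∈ Set.Ioo (0 : ℝ) 1) ∧ ∑ i, w i = k) →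
          lmlObj x z ≤ lmlObj x w) → z = y) :=
  lml_min_exists_unique_general n k hk hkn x
end

section
/- Let n ≥ 1, let k be an integer with 0 < k < n, and let x ∈ ℝⁿ. A point y with 0 < y_i < 1 for all i and ∑_i y_i = k is the minimizer of y ↦ -⟨x, y⟩ - H_b(y) over {y ∈ (0,1)ⁿ : ∑_i y_i = k} if and only if there exists ν ∈ ℝ such that y_i = σ(x_i + ν) for every i. -/
open Real Finset

noncomputable def logistic (t : ℝ) : ℝ := 1 / (1 + Real.exp (-t))

/-!
Write the objective as `-∑ i, (x i * y i + h (y i))` with `h = Real.binEntropy`, which is concave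
with `h' p = log (1 - p) - log p`. The condition `y i = σ (x i + ν)` says `h' (y i) = -(x i + ν)`,
i.e. that the gradient of the objective at `y` is the constant vector `ν`. Sufficiency: the
tangent-line inequality for `h` bounds the objective at a feasible `z` below by its value at `y`
plus `ν * ∑ i, (z i - y i) = 0`. Necessity: moving from `y` along `eᵢ - eⱼ` stays feasible for
small steps, so at a minimizer the directional derivative
`(log yᵢ - log (1 - yᵢ) - xᵢ) - (log yⱼ - log (1 - yⱼ) - xⱼ)` vanishes.
-/

open Filter Topology

lemma logistic_eq_sigmoid : logistic = sigmoid :=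
  funext fun t ↦ one_div (1 + exp (-t))

lemma log_one_sub_sigmoid_sub_log_sigmoid (t : ℝ) :
    log (1 - sigmoid t) - log (sigmoid t) = -t := by
  rw [← sigmoid_neg, ← log_div (sigmoid_pos _).ne' (sigmoid_pos _).ne', ← sigmoid_mul_rexp_neg,
    mul_div_cancel_left₀ _ (sigmoid_pos _).ne', log_exp]

lemma sigmoid_log_sub_log_one_sub {a : ℝ} (ha : a ∈ Set.Ioo 0 1) :
    sigmoid (log a - log (1 - a)) = a := by
  obtain ⟨t, rfl⟩ : a ∈ Set.range sigmoid := range_sigmoid ▸ ha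
  rw [← neg_sub, log_one_sub_sigmoid_sub_log_sigmoid, neg_neg]

lemma ConcaveOn.le_add_mul_sub_of_hasDerivAt {S : Set ℝ} {f : ℝ → ℝ} {a b f' : ℝ}
    (hf : ConcaveOn ℝ S f) (ha : a ∈ S) (hb : b ∈ S) (hf' : HasDerivAt f f' a) :
    f b ≤ f a + f' * (b - a) := by
  rcases lt_trichotomy a b with hab | rfl | hba
  · have := hf.slope_le_of_hasDerivAt ha hb hab hf'
    rw [slope_def_field, div_le_iff₀ (sub_pos.mpr hab)] at this
    linarith
  · simp
  · have := hf.le_slope_of_hasDerivAt hb ha hba hf'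
    rw [slope_def_field, le_div_iff₀ (sub_pos.mpr hba)] at this
    linarith

lemma binEntropy_le_add_mul_sub {a b : ℝ} (ha : a ∈ Set.Ioo 0 1) (hb : b ∈ Set.Ioo 0 1) :
    binEntropy b ≤ binEntropy a + (log (1 - a) - log a) * (b - a) :=
  strictConcave_binEntropy.concaveOn.le_add_mul_sub_of_hasDerivAt (Set.Ioo_subset_Icc_self ha)
    (Set.Ioo_subset_Icc_self hb) (hasDerivAt_binEntropy ha.1.ne' ha.2.ne)

lemma binEnt_eq_sum_binEntropy {n : ℕ} (y : Fin n → ℝ) :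
    binEnt y = ∑ i, binEntropy (y i) := by
  simp only [binEnt, binEntropy, log_inv, ← sum_neg_distrib]
  congr 1 with i
  ring

lemma lmlObj_eq_sum {n : ℕ} (x y : Fin n → ℝ) :
    lmlObj x y = -∑ i, (x i * y i + binEntropy (y i)) := by
  rw [lmlObj, binEnt_eq_sum_binEntropy, sum_add_distrib]
  ring

/-- The feasible set `L_k`; `IsMinOn (lmlObj x) (lmlFeasible n k) y` says `y = Π_{L_k}(x)`. -/
def lmlFeasible (n : ℕ) (k : ℝ) : Set (Fin n → ℝ) :=
  {z | (∀ i, z i ∈ Set.Ioo 0 1) ∧ ∑ i, z i = k}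

lemma hasDerivAt_lmlObj_add_smul {n : ℕ} {x y : Fin n → ℝ} (hy : ∀ i, y i ∈ Set.Ioo 0 1)
    (d : Fin n → ℝ) :
    HasDerivAt (fun ε : ℝ ↦ lmlObj x (y + ε • d))
      (∑ i, (log (y i) - log (1 - y i) - x i) * d i) 0 := by
  have hterm : ∀ i, HasDerivAt (fun ε : ℝ ↦ x i * (y i + ε * d i) + binEntropy (y i + ε * d i))
      ((x i + (log (1 - y i) - log (y i))) * d i) 0 := by
    intro i
    have hline : HasDerivAt (fun ε : ℝ ↦ y i + ε * d i) (d i) 0 := by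
      simpa using ((hasDerivAt_id (0 : ℝ)).mul_const (d i)).const_add (y i)
    have hH := (hasDerivAt_binEntropy (hy i).1.ne' (hy i).2.ne).comp_of_eq 0 hline (by simp)
    rw [add_mul]
    exact (hline.const_mul (x i)).fun_add hH
  have hfun : (fun ε : ℝ ↦ lmlObj x (y + ε • d)) =
      fun ε ↦ -∑ i, (x i * (y i + ε * d i) + binEntropy (y i + ε * d i)) := by
    ext ε
    simp [lmlObj_eq_sum]
  have hderiv : ∑ i, (log (y i) - log (1 - y i) - x i) * d i =
      -∑ i, (x i + (log (1 - y i) - log (y i))) * d i := by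
    rw [← sum_neg_distrib]
    congr 1 with i
    ring
  rw [hfun, hderiv]
  exact (HasDerivAt.fun_sum fun i _ ↦ hterm i).neg

lemma eventually_add_smul_mem_lmlFeasible {n : ℕ} {k : ℝ} {y d : Fin n → ℝ}
    (hy : y ∈ lmlFeasible n k) (hd : ∑ i, d i = 0) :
    ∀ᶠ ε in 𝓝 (0 : ℝ), y + ε • d ∈ lmlFeasible n k := by
  have hmem : ∀ i, ∀ᶠ ε in 𝓝 (0 : ℝ), (y + ε • d) i ∈ Set.Ioo 0 1 := fun i ↦
    (Continuous.continuousAt (by fun_prop)).eventually_mem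
      (isOpen_Ioo.mem_nhds (by simpa using hy.1 i))
  filter_upwards [eventually_all.2 hmem] with ε hε
  refine ⟨hε, ?_⟩
  simp [sum_add_distrib, ← mul_sum, hd, hy.2]

lemma sum_mul_eq_zero_of_isMinOn_lmlObj {n : ℕ} {k : ℝ} {x y : Fin n → ℝ}
    (hy : y ∈ lmlFeasible n k) (hmin : IsMinOn (lmlObj x) (lmlFeasible n k) y)
    {d : Fin n → ℝ} (hd : ∑ i, d i = 0) :
    ∑ i, (log (y i) - log (1 - y i) - x i) * d i = 0 := by
  refine IsLocalMin.hasDerivAt_eq_zero ?_ (hasDerivAt_lmlObj_add_smul hy.1 d)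
  filter_upwards [eventually_add_smul_mem_lmlFeasible hy hd] with ε hε
  simpa using hmin hε

theorem exists_eq_sigmoid_of_isMinOn_lmlObj {n : ℕ} {k : ℝ} {x y : Fin n → ℝ}
    (hy : y ∈ lmlFeasible n k) (hmin : IsMinOn (lmlObj x) (lmlFeasible n k) y) :
    ∃ ν, ∀ i, y i = sigmoid (x i + ν) := by
  set L : Fin n → ℝ := fun i ↦ log (y i) - log (1 - y i) - x i
  have hL : ∀ i j, L i = L j := by
    intro i j
    have := sum_mul_eq_zero_of_isMinOn_lmlObj hy hmin
      (d := Pi.single i 1 - Pi.single j 1) (by simp)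
    simpa [mul_sub, sum_sub_distrib, sub_eq_zero, Pi.single_apply] using this
  rcases isEmpty_or_nonempty (Fin n) with _ | ⟨⟨i₀⟩⟩
  · exact ⟨0, isEmptyElim⟩
  · refine ⟨L i₀, fun i ↦ ?_⟩
    rw [← hL i i₀, ← sigmoid_log_sub_log_one_sub (hy.1 i)]
    simp only [L, add_sub_cancel]

theorem isMinOn_lmlObj_of_eq_sigmoid {n : ℕ} {k : ℝ} {x y : Fin n → ℝ} {ν : ℝ}
    (hν : ∀ i, y i = sigmoid (x i + ν)) (hsum : ∑ i, y i = k) :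
    IsMinOn (lmlObj x) (lmlFeasible n k) y := by
  intro z hz
  have htangent : ∀ i,
      x i * z i + binEntropy (z i) ≤ x i * y i + binEntropy (y i) - ν * (z i - y i) := by
    intro i
    have h := binEntropy_le_add_mul_sub ⟨sigmoid_pos (x i + ν), sigmoid_lt_one (x i + ν)⟩ (hz.1 i)
    rw [log_one_sub_sigmoid_sub_log_sigmoid, ← hν i] at h
    linear_combination h
  have hshift : ∑ i, ν * (z i - y i) = 0 := by
    rw [← mul_sum, sum_sub_distrib, hz.2, hsum, sub_self, mul_zero]
  show lmlObj x y ≤ lmlObj x z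
  rw [lmlObj_eq_sum, lmlObj_eq_sum, neg_le_neg_iff]
  calc ∑ i, (x i * z i + binEntropy (z i))
      ≤ ∑ i, (x i * y i + binEntropy (y i) - ν * (z i - y i)) := sum_le_sum fun i _ ↦ htangent i
    _ = ∑ i, (x i * y i + binEntropy (y i)) := by rw [sum_sub_distrib, hshift, sub_zero]

theorem lml_optimality_iff_dual_general (n k : ℕ)
    (x y : Fin n → ℝ) (hy : ∀ i, y i ∈ Set.Ioo (0 : ℝ) 1) (hsum : ∑ i, y i = k) :
    (∀ z : Fin n → ℝ, ((∀ i, z i ∈ Set.Ioo (0 : ℝ) 1) ∧ ∑ i, z i = k) →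
        lmlObj x y ≤ lmlObj x z) ↔
      ∃ ν : ℝ, ∀ i, y i = logistic (x i + ν) := by
  rw [logistic_eq_sigmoid]
  exact ⟨fun hmin ↦ exists_eq_sigmoid_of_isMinOn_lmlObj ⟨hy, hsum⟩ hmin,
    fun ⟨ν, hν⟩ z hz ↦ isMinOn_lmlObj_of_eq_sigmoid hν hsum hz⟩

/-- a feasible point `y` is the minimizer of the LML objective over
`{y ∈ (0,1)ⁿ : ∑ y_i = k}` iff there exists `ν ∈ ℝ` with `y_i = σ(x_i + ν)` for all `i`. -/
theorem lml_optimality_iff_dual (n k : ℕ) (hn : 1 ≤ n) (hk : 0 < k) (hkn : k < n)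
    (x y : Fin n → ℝ) (hy : ∀ i, y i ∈ Set.Ioo (0 : ℝ) 1) (hsum : ∑ i, y i = k) :
    (∀ z : Fin n → ℝ, ((∀ i, z i ∈ Set.Ioo (0 : ℝ) 1) ∧ ∑ i, z i = k) →
        lmlObj x y ≤ lmlObj x z) ↔
      ∃ ν : ℝ, ∀ i, y i = logistic (x i + ν) :=
  lml_optimality_iff_dual_general n k x y hy hsum
end

section
/- Let n ≥ 1, let k be an integer with 0 < k < n, and let x ∈ ℝⁿ. The LML projection y* = Π_{L_k}(x) preserves the order of the coordinates of x: for all indices i, j, if x_i ≥ x_j then y*_i ≥ y*_j, and if x_i > x_j then y*_i > y*_j. -/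
/-!
A minimizer is a stationary point of the objective along every direction `d` with `∑ d = 0`,
since the feasible set is relatively open in the hyperplane `∑ y = k`. Moving mass from
coordinate `j` to coordinate `i` gives `logit yᵢ - xᵢ = logit yⱼ - xⱼ`, where
`logit t = log t - log (1 - t)` is the derivative of `-H_b`. As `logit` is strictly increasing
on `(0, 1)`, the coordinates of `y` are ordered like those of `x`.
-/

open Real Finset

open Filter Topology

noncomputable def logit (t : ℝ) : ℝ := log t - log (1 - t)

lemma strictMonoOn_logit : StrictMonoOn logit (Set.Ioo 0 1) := by
  intro s ⟨hs0, _⟩ t ⟨_, ht1⟩ hst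
  have := log_lt_log hs0 hst
  have := log_lt_log (sub_pos.2 ht1) (by linarith : 1 - t < 1 - s)
  unfold logit
  linarith

lemma hasDerivAt_lmlObj_line {n : ℕ} (x y d : Fin n → ℝ) (hy : ∀ i, y i ∈ Set.Ioo 0 1) :
    HasDerivAt (fun t : ℝ => lmlObj x (y + t • d)) (∑ i, d i * (logit (y i) - x i)) 0 := by
  have hline : ∀ i, HasDerivAt (fun t : ℝ => y i + t * d i) (d i) 0 := fun i => by
    simpa using ((hasDerivAt_id (0 : ℝ)).mul_const (d i)).const_add (y i)
  have hent : ∀ i, HasDerivAt (fun t : ℝ => binEntropy (y i + t * d i))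
      ((log (1 - y i) - log (y i)) * d i) 0 := fun i =>
    (hasDerivAt_binEntropy (hy i).1.ne' (hy i).2.ne).comp_of_eq 0 (hline i) (by simp)
  have hobj : (fun t : ℝ => lmlObj x (y + t • d))
      = fun t => -∑ i, x i * (y i + t * d i) - ∑ i, binEntropy (y i + t * d i) := by
    funext t
    simp [lmlObj, binEnt_eq_sum_binEntropy]
  rw [hobj]
  refine (((HasDerivAt.fun_sum fun i _ => (hline i).const_mul (x i)).fun_neg).fun_sub
    (HasDerivAt.fun_sum fun i _ => hent i)).congr_deriv ?_
  rw [← sum_neg_distrib, ← sum_sub_distrib]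
  exact sum_congr rfl fun i _ => by unfold logit; ring

lemma sum_mul_logit_sub_eq_zero_of_minimizer {n : ℕ} {x y d : Fin n → ℝ}
    (hy : ∀ i, y i ∈ Set.Ioo 0 1)
    (hmin : ∀ z : Fin n → ℝ, (∀ i, z i ∈ Set.Ioo 0 1) → ∑ i, z i = ∑ i, y i →
      lmlObj x y ≤ lmlObj x z)
    (hd : ∑ i, d i = 0) :
    ∑ i, d i * (logit (y i) - x i) = 0 := by
  refine IsLocalMin.hasDerivAt_eq_zero ?_ (hasDerivAt_lmlObj_line x y d hy)
  have hopen : IsOpen {z : Fin n → ℝ | ∀ i, z i ∈ Set.Ioo 0 1} := by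
    simpa [Set.pi] using isOpen_set_pi Set.finite_univ fun (_ : Fin n) _ => isOpen_Ioo
  have hnear : ∀ᶠ t in 𝓝 (0 : ℝ), ∀ i, (y + t • d) i ∈ Set.Ioo 0 1 :=
    (continuous_const.add (continuous_id.smul continuous_const)).continuousAt.preimage_mem_nhds
      (hopen.mem_nhds (by simpa using hy))
  filter_upwards [hnear] with t ht
  simpa using hmin _ ht (by simp [sum_add_distrib, ← mul_sum, hd])

lemma logit_sub_eq_of_minimizer {n : ℕ} {x y : Fin n → ℝ} (hy : ∀ i, y i ∈ Set.Ioo 0 1)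
    (hmin : ∀ z : Fin n → ℝ, (∀ i, z i ∈ Set.Ioo 0 1) → ∑ i, z i = ∑ i, y i →
      lmlObj x y ≤ lmlObj x z)
    (i j : Fin n) :
    logit (y i) - x i = logit (y j) - x j := by
  have := sum_mul_logit_sub_eq_zero_of_minimizer hy hmin
    (d := Pi.single i 1 - Pi.single j 1) (by simp)
  simp only [Pi.sub_apply, sub_mul, sum_sub_distrib, Pi.single_apply, ite_mul, one_mul, zero_mul,
    sum_ite_eq', mem_univ, if_true] at this
  linarith

theorem lml_projection_order_preserving_general (n k : ℕ)
    (x y : Fin n → ℝ)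
    (hyfeas : (∀ i, y i ∈ Set.Ioo (0 : ℝ) 1) ∧ ∑ i, y i = k)
    (hymin : ∀ z : Fin n → ℝ, ((∀ i, z i ∈ Set.Ioo (0 : ℝ) 1) ∧ ∑ i, z i = k) →
      lmlObj x y ≤ lmlObj x z) :
    ∀ i j, (x j ≤ x i → y j ≤ y i) ∧ (x j < x i → y j < y i) := by
  obtain ⟨hy, hysum⟩ := hyfeas
  intro i j
  have hstat := logit_sub_eq_of_minimizer hy (fun z hz hs => hymin z ⟨hz, hs.trans hysum⟩) i j
  exact ⟨fun _ => (strictMonoOn_logit.le_iff_le (hy j) (hy i)).1 (by linarith),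
    fun _ => (strictMonoOn_logit.lt_iff_lt (hy j) (hy i)).1 (by linarith)⟩

/-- the LML projection (the minimizer of the LML objective over
`{y ∈ (0,1)ⁿ : ∑ y_i = k}`) preserves the order of the coordinates of `x`. -/
theorem lml_projection_order_preserving (n k : ℕ) (hn : 1 ≤ n) (hk : 0 < k) (hkn : k < n)
    (x y : Fin n → ℝ)
    (hyfeas : (∀ i, y i ∈ Set.Ioo (0 : ℝ) 1) ∧ ∑ i, y i = k)
    (hymin : ∀ z : Fin n → ℝ, ((∀ i, z i ∈ Set.Ioo (0 : ℝ) 1) ∧ ∑ i, z i = k) →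
      lmlObj x y ≤ lmlObj x z) :
    ∀ i j, (x j ≤ x i → y j ≤ y i) ∧ (x j < x i → y j < y i) :=
  lml_projection_order_preserving_general n k x y hyfeas hymin
end

section
/- Let n ≥ 1, let k be an integer with 0 < k < n, and let x ∈ ℝⁿ have pairwise distinct coordinates. Then the set of k indices achieving the k largest values of Π_{L_k}(x) equals the set of k indices achieving the k largest values of x; that is, for every index i, the i-th coordinate of Π_{L_k}(x) is among the k largest coordinates of Π_{L_k}(x) if and only if x_i is among the k largest coordinates of x. -/
open Real Finset


lemma sum_two_diff {n : ℕ} (f g : Fin n → ℝ) (i j : Fin n) (hij : i ≠ j)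
    (h : ∀ m, m ≠ i → m ≠ j → f m = g m) :
    ∑ m, f m - ∑ m, g m = (f i - g i) + (f j - g j) := by
  have h1 : ∑ m, (f m - g m) = ∑ m ∈ ({i, j} : Finset (Fin n)), (f m - g m) := by
    refine (Finset.sum_subset (Finset.subset_univ _) ?_).symm
    intro m _ hm
    simp only [Finset.mem_insert, Finset.mem_singleton] at hm
    push_neg at hm
    rw [h m hm.1 hm.2]; ring
  rw [← Finset.sum_sub_distrib, h1, Finset.sum_pair hij]

lemma slog_diff (a b : ℝ) (ha : 0 < a) (hb : 0 < b) :
    a * Real.log a - b * Real.log b ≤ (a - b) * (Real.log a + 1) := by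
  have h := Real.log_le_sub_one_of_pos (div_pos ha hb)
  rw [Real.log_div ha.ne' hb.ne'] at h
  have h2 : b * (Real.log a - Real.log b) ≤ a - b := by
    have h3 : b * (a / b - 1) = a - b := by field_simp
    nlinarith
  nlinarith

lemma log_gap (a b : ℝ) (hb : 0 < b) (hab : b ≤ a) :
    Real.log a - Real.log b ≤ (a - b) / b := by
  have ha : 0 < a := lt_of_lt_of_le hb hab
  have h := Real.log_le_sub_one_of_pos (div_pos ha hb)
  rw [Real.log_div ha.ne' hb.ne'] at h
  have h2 : a / b - 1 = (a - b) / b := by field_simp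
  linarith


set_option maxHeartbeats 2000000 in
/-- when the coordinates of `x` are pairwise distinct, a coordinate of the
LML projection `y = Π_{L_k}(x)` is among the `k` largest coordinates of `y` iff the
corresponding coordinate of `x` is among the `k` largest coordinates of `x`, i.e. the
top-`k` index sets of `y` and `x` coincide. -/
theorem lml_projection_topk_indices (n k : ℕ) (hn : 1 ≤ n) (hk : 0 < k) (hkn : k < n)
    (x : Fin n → ℝ) (hdist : Function.Injective x)
    (y : Fin n → ℝ)
    (hyfeas : (∀ i, y i ∈ Set.Ioo (0 : ℝ) 1) ∧ ∑ i, y i = k)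
    (hymin : ∀ z : Fin n → ℝ, ((∀ i, z i ∈ Set.Ioo (0 : ℝ) 1) ∧ ∑ i, z i = k) →
      lmlObj x y ≤ lmlObj x z) :
    (∀ i, (Finset.univ.filter fun j => y i < y j).card < k ↔
          (Finset.univ.filter fun j => x i < x j).card < k) ∧
    {i : Fin n | (Finset.univ.filter fun j => y i < y j).card < k} =
      {i : Fin n | (Finset.univ.filter fun j => x i < x j).card < k} := by
  have objform : ∀ w : Fin n → ℝ, lmlObj x w =
      ∑ m, (w m * Real.log (w m) + (1 - w m) * Real.log (1 - w m) - x m * w m) := by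
    intro w
    unfold lmlObj binEnt
    rw [Finset.sum_sub_distrib]
    ring
  -- weak monotonicity via the swap argument
  have weak : ∀ i j : Fin n, x i < x j → y i ≤ y j := by
    intro i j hxij
    by_contra hlt
    push_neg at hlt
    have hij : i ≠ j := fun e => absurd (e ▸ hxij) (lt_irrefl _)
    set z : Fin n → ℝ := y ∘ Equiv.swap i j with hz
    have hzfeas : (∀ m, z m ∈ Set.Ioo (0 : ℝ) 1) ∧ ∑ m, z m = k := by
      refine ⟨fun m => hyfeas.1 _, ?_⟩
      rw [show (∑ m, z m) = ∑ m, y m from Equiv.sum_comp (Equiv.swap i j) y]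
      exact hyfeas.2
    have hb : binEnt z = binEnt y := by
      unfold binEnt
      congr 1
      exact Equiv.sum_comp (Equiv.swap i j)
        (fun m => y m * Real.log (y m) + (1 - y m) * Real.log (1 - y m))
    have hle := hymin z hzfeas
    have hS : ∑ m, x m * z m ≤ ∑ m, x m * y m := by
      unfold lmlObj at hle
      rw [hb] at hle
      linarith
    have hd := sum_two_diff (fun m => x m * z m) (fun m => x m * y m) i j hij
      (fun m h1 h2 => by
        simp only [hz, Function.comp_apply, Equiv.swap_apply_of_ne_of_ne h1 h2])
    simp only [hz, Function.comp_apply, Equiv.swap_apply_left, Equiv.swap_apply_right] at hd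
    simp only [hz, Function.comp_apply] at hS
    nlinarith [hd, hS, hxij, hlt]
  -- no ties between distinct coordinates
  have notie : ∀ i j : Fin n, i ≠ j → x i < x j → y i ≠ y j := by
    intro i j hij hx heq
    set t := y i with ht
    have htI := hyfeas.1 i
    have ht0 : 0 < t := htI.1
    have ht1 : t < 1 := htI.2
    set d := x j - x i with hdd
    have hd0 : 0 < d := by simp only [hdd]; linarith
    set ε := min (t / 2) (min ((1 - t) / 2) (d * t * (1 - t) / 16)) with hε
    have hε0 : 0 < ε := by
      apply lt_min
      · linarith
      · apply lt_min
        · linarith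
        · have h1t : (0:ℝ) < 1 - t := by linarith
          exact div_pos (mul_pos (mul_pos hd0 ht0) h1t) (by norm_num)
    have hεt : ε ≤ t / 2 := min_le_left _ _
    have hε1t : ε ≤ (1 - t) / 2 := le_trans (min_le_right _ _) (min_le_left _ _)
    have hεd : ε ≤ d * t * (1 - t) / 16 := le_trans (min_le_right _ _) (min_le_right _ _)
    have hA : 0 < t - ε := by linarith
    have hB : 0 < 1 - t - ε := by linarith
    set z : Fin n → ℝ := Function.update (Function.update y i (t - ε)) j (t + ε) with hzdef
    have hzi : z i = t - ε := by
      simp only [hzdef]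
      rw [Function.update_of_ne hij, Function.update_self]
    have hzj : z j = t + ε := by simp only [hzdef, Function.update_self]
    have hzm : ∀ m, m ≠ i → m ≠ j → z m = y m := by
      intro m h1 h2
      simp only [hzdef]
      rw [Function.update_of_ne h2, Function.update_of_ne h1]
    have hzfeas : (∀ m, z m ∈ Set.Ioo (0 : ℝ) 1) ∧ ∑ m, z m = k := by
      constructor
      · intro m
        by_cases h1 : m = i
        · subst h1; rw [hzi]; constructor <;> linarith
        · by_cases h2 : m = j
          · subst h2; rw [hzj]; constructor <;> linarith
          · rw [hzm m h1 h2]; exact hyfeas.1 m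
      · have hs := sum_two_diff z y i j hij hzm
        rw [hzi, hzj, ← heq, ← ht] at hs
        have hzy : ∑ m, z m = ∑ m, y m := by linarith
        rw [hzy]; exact hyfeas.2
    have hle := hymin z hzfeas
    rw [objform z, objform y] at hle
    have hdiff := sum_two_diff
      (fun m => z m * Real.log (z m) + (1 - z m) * Real.log (1 - z m) - x m * z m)
      (fun m => y m * Real.log (y m) + (1 - y m) * Real.log (1 - y m) - x m * y m)
      i j hij (fun m h1 h2 => by simp only [hzm m h1 h2])
    rw [hzi, hzj, ← heq, ← ht] at hdiff
    have r1 : (1 : ℝ) - (t - ε) = 1 - t + ε := by ring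
    have r2 : (1 : ℝ) - (t + ε) = 1 - t - ε := by ring
    rw [r1, r2] at hdiff
    -- entropy estimates
    have e1 := slog_diff (t + ε) t (by linarith) ht0
    have e2 := slog_diff (t - ε) t hA ht0
    have e3 := slog_diff (1 - t - ε) (1 - t) hB (by linarith)
    have e4 := slog_diff (1 - t + ε) (1 - t) (by linarith) (by linarith)
    have g1 := log_gap (t + ε) (t - ε) hA (by linarith)
    have g2 := log_gap (1 - t + ε) (1 - t - ε) hB (by linarith)
    have g1' : Real.log (t + ε) - Real.log (t - ε) ≤ 4 * ε / t := by
      have h2 : ((t + ε) - (t - ε)) / (t - ε) ≤ 4 * ε / t := by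
        rw [div_le_div_iff₀ hA ht0]
        nlinarith
      linarith
    have g2' : Real.log (1 - t + ε) - Real.log (1 - t - ε) ≤ 4 * ε / (1 - t) := by
      have h2 : ((1 - t + ε) - (1 - t - ε)) / (1 - t - ε) ≤ 4 * ε / (1 - t) := by
        rw [div_le_div_iff₀ hB (by linarith : (0:ℝ) < 1 - t)]
        nlinarith
      linarith
    have p1 : ε * (Real.log (t + ε) - Real.log (t - ε)) ≤ ε * (4 * ε / t) :=
      mul_le_mul_of_nonneg_left g1' hε0.le
    have p2 : ε * (Real.log (1 - t + ε) - Real.log (1 - t - ε)) ≤ ε * (4 * ε / (1 - t)) :=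
      mul_le_mul_of_nonneg_left g2' hε0.le
    have q1 : 4 * ε / t ≤ d * (1 - t) / 4 := by
      rw [div_le_div_iff₀ ht0 (by norm_num : (0:ℝ) < 4)]
      nlinarith
    have q2 : 4 * ε / (1 - t) ≤ d * t / 4 := by
      rw [div_le_div_iff₀ (by linarith : (0:ℝ) < 1 - t) (by norm_num : (0:ℝ) < 4)]
      nlinarith
    have p1' : ε * (4 * ε / t) ≤ ε * (d * (1 - t) / 4) :=
      mul_le_mul_of_nonneg_left q1 hε0.le
    have p2' : ε * (4 * ε / (1 - t)) ≤ ε * (d * t / 4) :=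
      mul_le_mul_of_nonneg_left q2 hε0.le
    have hεd0 : 0 < ε * d := mul_pos hε0 hd0
    nlinarith [hle, hdiff, e1, e2, e3, e4, p1, p2, p1', p2', hεd0]
  -- strict correspondence
  have key : ∀ i j : Fin n, x i < x j ↔ y i < y j := by
    intro i j
    constructor
    · intro h
      have hij : i ≠ j := fun e => absurd (e ▸ h) (lt_irrefl _)
      exact lt_of_le_of_ne (weak i j h) (notie i j hij h)
    · intro h
      have hij : i ≠ j := fun e => absurd (e ▸ h) (lt_irrefl _)
      rcases lt_trichotomy (x i) (x j) with h' | h' | h'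
      · exact h'
      · exact absurd (hdist h') hij
      · have h2 := lt_of_le_of_ne (weak j i h') (notie j i hij.symm h')
        linarith
  have filt : ∀ i, (Finset.univ.filter fun j => y i < y j) =
      (Finset.univ.filter fun j => x i < x j) := by
    intro i
    ext j
    simp [key i j]
  refine ⟨fun i => by rw [filt i], ?_⟩
  ext i
  simp only [Set.mem_setOf_eq]
  rw [filt i]
end

section
/- Let n ≥ 1, let k be an integer with 0 < k < n, let x ∈ ℝⁿ, and let x_{(1)} ≥ x_{(2)} ≥ … ≥ x_{(n)} denote the coordinates of x sorted in descending order. If Δ > 0 satisfies (k + 1)·σ(Δ) > k, then g(-x_{(k+1)} + Δ) > 0, where g(ν) = ∑_{j=1}^n σ(x_j + ν) - k. -/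
open Real Finset

lemma logistic_pos (t : ℝ) : 0 < logistic t := by
  unfold logistic
  positivity

lemma logistic_mono : Monotone logistic := by
  intro a b hab
  unfold logistic
  have h1 : (0:ℝ) < 1 + Real.exp (-b) := by positivity
  apply one_div_le_one_div_of_le h1
  have := Real.exp_le_exp.mpr (neg_le_neg hab)
  linarith

/-- if `s` is the descending sort of `x` and `Δ > 0` satisfies
`(k + 1)·σ(Δ) > k`, then `g(-x_{(k+1)} + Δ) > 0` where `g(ν) = ∑_j σ(x_j + ν) - k`. -/
theorem lml_dual_initial_upper_bound (n k : ℕ) (hk : 0 < k) (hkn : k < n)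
    (x s : Fin n → ℝ)
    (hperm : ∃ e : Equiv.Perm (Fin n), s = x ∘ e) (hsort : Antitone s)
    (Δ : ℝ) (hΔ : 0 < Δ)
    (hΔsat : ((k : ℝ) + 1) * logistic Δ > k) :
    0 < (∑ j, logistic (x j + (-(s ⟨k, hkn⟩) + Δ))) - (k : ℝ) := by
  obtain ⟨e, he⟩ := hperm
  set c : ℝ := -(s ⟨k, hkn⟩) + Δ with hc
  have hsum : (∑ j, logistic (x j + c)) = ∑ j, logistic (s j + c) := by
    rw [he]
    exact (Equiv.sum_comp e (fun j => logistic (x j + c))).symm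
  rw [hsum]
  have hsub : Finset.Iic (⟨k, hkn⟩ : Fin n) ⊆ Finset.univ := Finset.subset_univ _
  have h1 : ∑ j ∈ Finset.Iic (⟨k, hkn⟩ : Fin n), logistic (s j + c)
      ≤ ∑ j, logistic (s j + c) :=
    Finset.sum_le_sum_of_subset_of_nonneg hsub
      (fun j _ _ => (logistic_pos _).le)
  have h2 : ((k:ℝ) + 1) * logistic Δ
      ≤ ∑ j ∈ Finset.Iic (⟨k, hkn⟩ : Fin n), logistic (s j + c) := by
    have hcard : (Finset.Iic (⟨k, hkn⟩ : Fin n)).card = k + 1 := by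
      simp [Fin.card_Iic]
    calc ((k:ℝ) + 1) * logistic Δ
        = ∑ _j ∈ Finset.Iic (⟨k, hkn⟩ : Fin n), logistic Δ := by
          rw [Finset.sum_const, hcard]; push_cast; ring
      _ ≤ ∑ j ∈ Finset.Iic (⟨k, hkn⟩ : Fin n), logistic (s j + c) := by
          apply Finset.sum_le_sum
          intro j hj
          apply logistic_mono
          have hle : s (⟨k, hkn⟩ : Fin n) ≤ s j := hsort (Finset.mem_Iic.mp hj)
          rw [hc]; linarith
  linarith
end

section
/- Let n ≥ 1, let k be an integer with 0 < k < n, let x ∈ ℝⁿ with sorted coordinates x_{(1)} ≥ … ≥ x_{(n)}, and let Δ > 0 satisfy both (n - k + 1)·σ(-Δ) < 1 and (k + 1)·σ(Δ) > k. Then the unique root ν* of g(ν) = ∑_j σ(x_j + ν) - k lies strictly in the interval (-x_{(k)} - Δ, -x_{(k+1)} + Δ). -/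
open Real Finset

lemma logistic_lt_one (t : ℝ) : logistic t < 1 := by
  unfold logistic
  rw [div_lt_one (by positivity)]
  linarith [Real.exp_pos (-t)]

lemma logistic_strictMono : StrictMono logistic := by
  intro a b hab
  unfold logistic
  apply one_div_lt_one_div_of_lt (by positivity)
  have := Real.exp_lt_exp.mpr (neg_lt_neg hab)
  linarith

lemma card_filter_fin_lt (n m : ℕ) (h : m ≤ n) :
    ((univ : Finset (Fin n)).filter (fun i : Fin n => (i : ℕ) < m)).card = m := by
  rcases eq_or_lt_of_le h with rfl | h
  · simp [Fin.is_lt]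
  · have heq : ((univ : Finset (Fin n)).filter (fun i : Fin n => (i : ℕ) < m))
        = Iio (⟨m, h⟩ : Fin n) := by
      ext i; simp [Fin.lt_def]
    rw [heq, Fin.card_Iio]

/-- if `s` is the descending sort of `x` and `Δ > 0` satisfies both
saturation conditions, then the unique root `ν*` of `g(ν) = ∑_j σ(x_j + ν) - k`
lies strictly inside `(-x_{(k)} - Δ, -x_{(k+1)} + Δ)`. -/
theorem lml_dual_root_in_bracket (n k : ℕ) (hk : 0 < k) (hkn : k < n)
    (x s : Fin n → ℝ)
    (hperm : ∃ e : Equiv.Perm (Fin n), s = x ∘ e) (hsort : Antitone s)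
    (Δ : ℝ) (hΔ : 0 < Δ)
    (hΔlow : ((n : ℝ) - k + 1) * logistic (-Δ) < 1)
    (hΔup : ((k : ℝ) + 1) * logistic Δ > k)
    (ν : ℝ) (hroot : (∑ j, logistic (x j + ν)) - (k : ℝ) = 0) :
    -(s ⟨k - 1, by omega⟩) - Δ < ν ∧ ν < -(s ⟨k, hkn⟩) + Δ := by
  obtain ⟨e, rfl⟩ := hperm
  set F : ℝ → ℝ := fun t => ∑ j, logistic (x (e j) + t) with hF
  have hFmono : StrictMono F := by
    intro a b hab
    apply Finset.sum_lt_sum_of_nonempty ⟨⟨0, by omega⟩, mem_univ _⟩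
    intro i _
    exact logistic_strictMono (by linarith)
  have hFν : F ν = k := by
    have : ∑ j, logistic (x (e j) + ν) = ∑ j, logistic (x j + ν) :=
      Equiv.sum_comp e (fun j => logistic (x j + ν))
    rw [hF]; simp only [Function.comp]; linarith [hroot, this]
  set a := x (e ⟨k - 1, by omega⟩) with ha
  set b := x (e ⟨k, hkn⟩) with hb
  constructor
  · -- F (-a - Δ) < k
    have hlt : F (-a - Δ) < k := by
      have hbound : ∀ i : Fin n, logistic (x (e i) + (-a - Δ)) ≤
          if (i : ℕ) < k - 1 then 1 else logistic (-Δ) := by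
        intro i
        split_ifs with h
        · exact (logistic_lt_one _).le
        · have hle : x (e i) ≤ a := by
            apply hsort
            simp [Fin.le_def]; omega
          exact logistic_strictMono.monotone (by linarith)
      have h1 : F (-a - Δ) ≤ ∑ i : Fin n,
          if (i : ℕ) < k - 1 then (1:ℝ) else logistic (-Δ) :=
        Finset.sum_le_sum (fun i _ => hbound i)
      have h2 : ∑ i : Fin n, (if (i : ℕ) < k - 1 then (1:ℝ) else logistic (-Δ))
          = (k - 1 : ℕ) * 1 + ((n : ℝ) - (k-1 : ℕ)) * logistic (-Δ) := by
        rw [Finset.sum_ite, Finset.sum_const, Finset.sum_const]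
        rw [Finset.filter_not, card_sdiff_of_subset (filter_subset _ _)]
        rw [card_filter_fin_lt n (k-1) (by omega), card_univ, Fintype.card_fin]
        rw [nsmul_eq_mul, nsmul_eq_mul, Nat.cast_sub (by omega : k - 1 ≤ n)]
      have hcast : ((k - 1 : ℕ) : ℝ) = (k : ℝ) - 1 := by
        push_cast [Nat.cast_sub hk]; ring
      rw [hcast] at h2
      have : ((n : ℝ) - ((k:ℝ) - 1)) = (n : ℝ) - k + 1 := by ring
      rw [this] at h2
      calc F (-a - Δ) ≤ ((k:ℝ) - 1) * 1 + ((n:ℝ) - k + 1) * logistic (-Δ) := by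
            rw [← h2]; exact h1
        _ < k := by linarith
    have := hFmono.lt_iff_lt (a := -a - Δ) (b := ν)
    rw [hFν] at this
    exact this.mp hlt
  · -- F (-b + Δ) > k
    have hgt : (k : ℝ) < F (-b + Δ) := by
      have h1 : ∑ i ∈ univ.filter (fun i : Fin n => (i : ℕ) < k + 1),
          logistic (x (e i) + (-b + Δ)) ≤ F (-b + Δ) := by
        apply Finset.sum_le_sum_of_subset_of_nonneg (filter_subset _ _)
        intro i _ _
        exact (logistic_pos _).le
      have h2 : (↑(k+1) : ℝ) * logistic Δ ≤
          ∑ i ∈ univ.filter (fun i : Fin n => (i : ℕ) < k + 1),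
            logistic (x (e i) + (-b + Δ)) := by
        have := Finset.sum_le_sum (s := univ.filter (fun i : Fin n => (i : ℕ) < k + 1))
          (f := fun _ => logistic Δ) (g := fun i => logistic (x (e i) + (-b + Δ))) ?_
        · rw [Finset.sum_const, card_filter_fin_lt n (k+1) (by omega),
            nsmul_eq_mul] at this
          exact_mod_cast this
        · intro i hi
          simp only [mem_filter] at hi
          have hge : b ≤ x (e i) := by
            apply hsort
            simp [Fin.le_def]; omega
          exact logistic_strictMono.monotone (by linarith)
      push_cast at h2
      linarith
    have := hFmono.lt_iff_lt (a := ν) (b := -b + Δ)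
    rw [hFν] at this
    exact this.mp hgt
end
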